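/- arXiv:cond-mat/0107190 — 5 statements merged into one kernel-verified Lean document; each statement's English description precedes it below -/
import Mathlib

section
/- Expected Shortfall is sub-additive: for integrable random variables X, Y on a common probability space and any α ∈ (0,1], ES_α(X+Y) ≤ ES_α(X) + ES_α(Y). -/
/-!
The lower quantile function `Q` of the law `ν` of `X` is Galois-dual to the CDF on `(0,1)`, so it
is monotone there and pushes Lebesgue measure on `(0,1)` forward to `ν`. Hence, for `α < 1`,
`∫₀^α Q ≥ q α - E (q - X)⁺` for every `q`, with equality at `q = Q α` (Rockafellar–Uryasev).
As `(a + b - X - Y)⁺ ≤ (a - X)⁺ + (b - Y)⁺`, the right-hand sides for `X` and `Y` at their own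
`α`-quantiles add up to at most the one for `X + Y` at `a + b`. For `α = 1` all three integrals
are expectations.
-/

open MeasureTheory

/-- The generalized inverse (lower quantile function) of the CDF of `X`. -/
noncomputable def qf {Ω : Type*} [MeasurableSpace Ω] (μ : Measure Ω) (X : Ω → ℝ) (p : ℝ) : ℝ :=
  sInf {x | p ≤ (μ {ω | X ω ≤ x}).toReal}

/-- Expected Shortfall at level `α`. -/
noncomputable def ES {Ω : Type*} [MeasurableSpace Ω] (μ : Measure Ω) (X : Ω → ℝ) (α : ℝ) : ℝ :=
  -(1/α) * ∫ p in Set.Ioc (0:ℝ) α, qf μ X p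

open ProbabilityTheory Set

namespace ProbabilityTheory

noncomputable def quantile (ν : Measure ℝ) (p : ℝ) : ℝ := sInf {x | p ≤ cdf ν x}

section Quantile

variable {ν : Measure ℝ} {p x α : ℝ}

lemma quantile_le_iff (hp : p ∈ Ioo 0 1) : quantile ν p ≤ x ↔ p ≤ cdf ν x := by
  obtain ⟨b, hb⟩ := (tendsto_cdf_atBot (μ := ν)).eventually_lt_const hp.1 |>.exists
  have hbdd : BddBelow {x | p ≤ cdf ν x} :=
    ⟨b, fun y hy => le_of_not_ge fun hyb => (hy.trans ((cdf ν).mono hyb)).not_gt hb⟩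
  have hne : {x | p ≤ cdf ν x}.Nonempty :=
    (tendsto_cdf_atTop (μ := ν)).eventually_const_lt hp.2 |>.exists.imp fun _ => le_of_lt
  refine ⟨fun h => ?_, fun h => csInf_le hbdd h⟩
  have hmem : ∀ y > x, p ≤ cdf ν y := fun y hy => by
    obtain ⟨z, hz, hzy⟩ := (csInf_lt_iff hbdd hne).1 (h.trans_lt hy)
    exact hz.trans ((cdf ν).mono hzy.le)
  exact ge_of_tendsto ((cdf ν).right_continuous x |>.mono Ioi_subset_Ici_self)
    (eventually_nhdsWithin_of_forall hmem)

lemma monotoneOn_quantile : MonotoneOn (quantile ν) (Ioo 0 1) := fun _ hp _ hq hpq =>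
  (quantile_le_iff hp).2 (hpq.trans ((quantile_le_iff hq).1 le_rfl))

lemma aemeasurable_quantile : AEMeasurable (quantile ν) (volume.restrict (Ioo 0 1)) :=
  aemeasurable_restrict_of_monotoneOn measurableSet_Ioo monotoneOn_quantile

lemma map_quantile [IsProbabilityMeasure ν] : (volume.restrict (Ioo 0 1)).map (quantile ν) = ν := by
  refine Measure.ext_of_Iic _ _ fun x => ?_
  rw [Measure.map_apply_of_aemeasurable aemeasurable_quantile measurableSet_Iic,
    Measure.restrict_apply' measurableSet_Ioo, ← ofReal_cdf]
  have hset : quantile ν ⁻¹' Iic x ∩ Ioo 0 1 = Ioo 0 1 ∩ Iic (cdf ν x) := by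
    ext p
    simp only [mem_inter_iff, mem_preimage, mem_Iic]
    exact ⟨fun h => ⟨h.2, (quantile_le_iff h.2).1 h.1⟩, fun h => ⟨(quantile_le_iff h.1).2 h.2, h.1⟩⟩
  rw [hset]
  apply le_antisymm
  · calc volume (Ioo 0 1 ∩ Iic (cdf ν x)) ≤ volume (Ioc 0 (cdf ν x)) :=
          measure_mono fun p hp => ⟨hp.1.1, hp.2⟩
      _ = _ := by simp
  · calc ENNReal.ofReal (cdf ν x) = volume (Ioo 0 (cdf ν x)) := by simp
      _ ≤ volume (Ioo 0 1 ∩ Iic (cdf ν x)) := measure_mono fun p hp =>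
          ⟨⟨hp.1, hp.2.trans_le (cdf_le_one _ _)⟩, hp.2.le⟩

variable [IsProbabilityMeasure ν]

lemma integral_comp_quantile {g : ℝ → ℝ} (hg : AEStronglyMeasurable g ν) :
    ∫ p in Ioo 0 1, g (quantile ν p) = ∫ x, g x ∂ν := by
  conv_rhs => rw [← map_quantile (ν := ν)]
  exact (integral_map aemeasurable_quantile (by rwa [map_quantile])).symm

lemma integrableOn_quantile (hν : Integrable id ν) : IntegrableOn (quantile ν) (Ioo 0 1) := by
  rw [← map_quantile (ν := ν)] at hν
  exact (integrable_map_measure hν.aestronglyMeasurable aemeasurable_quantile).1 hν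

lemma setIntegral_min_quantile (hν : Integrable id ν) (hα : α ∈ Ioo 0 1) (q : ℝ) :
    ∫ p in Ioc 0 α, min q (quantile ν p) = q * α - ∫ p in Ioc 0 α, max (q - quantile ν p) 0 := by
  have hint : IntegrableOn (quantile ν) (Ioc 0 α) :=
    (integrableOn_quantile hν).mono_set (Ioc_subset_Ioo_right hα.2)
  have hmin : ∀ p, min q (quantile ν p) = q - max (q - quantile ν p) 0 := fun p => by
    rcases le_total q (quantile ν p) with h | h <;> simp [h]
  have hpos : IntegrableOn (fun p => max (q - quantile ν p) 0) (Ioc 0 α) :=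
    ((integrable_const q).sub hint).pos_part
  simp_rw [hmin]
  rw [integral_sub (integrable_const q) hpos,
    setIntegral_const, Real.volume_real_Ioc_of_le hα.1.le, sub_zero, smul_eq_mul, mul_comm]

lemma sub_integral_posPart_le_setIntegral_quantile (hν : Integrable id ν) (hα : α ∈ Ioo 0 1)
    (q : ℝ) : q * α - ∫ x, max (q - x) 0 ∂ν ≤ ∫ p in Ioc 0 α, quantile ν p := by
  have hint := integrableOn_quantile hν
  have hsub : Ioc 0 α ⊆ Ioo 0 1 := Ioc_subset_Ioo_right hα.2
  calc q * α - ∫ x, max (q - x) 0 ∂ν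
      = q * α - ∫ p in Ioo 0 1, max (q - quantile ν p) 0 := by
        rw [integral_comp_quantile (g := fun x => max (q - x) 0) (by fun_prop)]
    _ ≤ q * α - ∫ p in Ioc 0 α, max (q - quantile ν p) 0 :=
        sub_le_sub_left (setIntegral_mono_set ((integrable_const q).sub hint).pos_part
          (ae_of_all _ fun _ => le_max_right _ _) hsub.eventuallyLE) _
    _ = ∫ p in Ioc 0 α, min q (quantile ν p) := (setIntegral_min_quantile hν hα q).symm
    _ ≤ ∫ p in Ioc 0 α, quantile ν p :=
        setIntegral_mono_on ((integrable_const q).inf (hint.mono_set hsub)) (hint.mono_set hsub)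
          measurableSet_Ioc fun _ _ => min_le_right _ _

lemma setIntegral_quantile_eq (hν : Integrable id ν) (hα : α ∈ Ioo 0 1) :
    ∫ p in Ioc 0 α, quantile ν p =
      quantile ν α * α - ∫ x, max (quantile ν α - x) 0 ∂ν := by
  set q := quantile ν α
  calc ∫ p in Ioc 0 α, quantile ν p
      = ∫ p in Ioc 0 α, min q (quantile ν p) :=
        setIntegral_congr_fun measurableSet_Ioc fun p hp => (min_eq_right
          (monotoneOn_quantile ⟨hp.1, hp.2.trans_lt hα.2⟩ hα hp.2)).symm
    _ = q * α - ∫ p in Ioc 0 α, max (q - quantile ν p) 0 := setIntegral_min_quantile hν hα q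
    _ = q * α - ∫ p in Ioo 0 1, max (q - quantile ν p) 0 := by
        rw [setIntegral_eq_of_subset_of_forall_sdiff_eq_zero measurableSet_Ioo
          (Ioc_subset_Ioo_right hα.2) fun p hp => ?_]
        have hαp : α < p := not_le.1 fun h => hp.2 ⟨hp.1.1, h⟩
        exact max_eq_right (sub_nonpos.2 (monotoneOn_quantile hα hp.1 hαp.le))
    _ = q * α - ∫ x, max (q - x) 0 ∂ν := by
        rw [integral_comp_quantile (g := fun x => max (q - x) 0) (by fun_prop)]

lemma setIntegral_quantile_Ioc_zero_one :
    ∫ p in Ioc 0 1, quantile ν p = ∫ x, x ∂ν := by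
  rw [integral_Ioc_eq_integral_Ioo]
  exact integral_comp_quantile (g := id) aestronglyMeasurable_id

end Quantile

section LowerQuantileFunction

variable {Ω : Type*} [MeasurableSpace Ω] {μ : Measure Ω} [IsProbabilityMeasure μ] {X Y : Ω → ℝ}
  {α : ℝ}

lemma qf_eq_quantile_map (hX : AEMeasurable X μ) : qf μ X = quantile (μ.map X) := by
  have := Measure.isProbabilityMeasure_map hX
  ext p
  simp only [qf, quantile, cdf_eq_real, measureReal_def,
    Measure.map_apply_of_aemeasurable hX measurableSet_Iic]
  rfl

omit [IsProbabilityMeasure μ] in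
lemma integrable_id_map (hX : Integrable X μ) : Integrable id (μ.map X) :=
  (integrable_map_measure aestronglyMeasurable_id hX.aemeasurable).2 hX

lemma setIntegral_qf_eq (hX : Integrable X μ) (hα : α ∈ Ioo 0 1) :
    ∫ p in Ioc 0 α, qf μ X p = qf μ X α * α - ∫ ω, max (qf μ X α - X ω) 0 ∂μ := by
  have := Measure.isProbabilityMeasure_map hX.aemeasurable
  rw [qf_eq_quantile_map hX.aemeasurable, setIntegral_quantile_eq (integrable_id_map hX) hα,
    integral_map hX.aemeasurable (by fun_prop)]

lemma sub_integral_posPart_le_setIntegral_qf (hX : Integrable X μ) (hα : α ∈ Ioo 0 1) (q : ℝ) :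
    q * α - ∫ ω, max (q - X ω) 0 ∂μ ≤ ∫ p in Ioc 0 α, qf μ X p := by
  have := Measure.isProbabilityMeasure_map hX.aemeasurable
  have h := sub_integral_posPart_le_setIntegral_quantile (integrable_id_map hX) hα q
  rwa [integral_map hX.aemeasurable (by fun_prop), ← qf_eq_quantile_map hX.aemeasurable] at h

lemma setIntegral_qf_Ioc_zero_one (hX : AEMeasurable X μ) :
    ∫ p in Ioc 0 1, qf μ X p = ∫ ω, X ω ∂μ := by
  have := Measure.isProbabilityMeasure_map hX
  rw [qf_eq_quantile_map hX, setIntegral_quantile_Ioc_zero_one, integral_map hX (by fun_prop)]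

lemma setIntegral_qf_add_le (hX : Integrable X μ) (hY : Integrable Y μ) (hα : α ∈ Ioc 0 1) :
    (∫ p in Ioc 0 α, qf μ X p) + ∫ p in Ioc 0 α, qf μ Y p ≤ ∫ p in Ioc 0 α, qf μ (X + Y) p := by
  rcases hα.2.lt_or_eq with hα1 | rfl
  · have hα' : α ∈ Ioo 0 1 := ⟨hα.1, hα1⟩
    set a := qf μ X α
    set b := qf μ Y α
    have hXa : Integrable (fun ω => max (a - X ω) 0) μ := ((integrable_const a).sub hX).pos_part
    have hYb : Integrable (fun ω => max (b - Y ω) 0) μ := ((integrable_const b).sub hY).pos_part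
    have hshortfall : ∫ ω, max (a + b - (X + Y) ω) 0 ∂μ ≤
        ∫ ω, max (a - X ω) 0 ∂μ + ∫ ω, max (b - Y ω) 0 ∂μ := by
      rw [← integral_add hXa hYb]
      refine integral_mono ((integrable_const _).sub (hX.add hY)).pos_part (hXa.add hYb)
        fun ω => ?_
      simpa [add_sub_add_comm] using max_add_add_le_max_add_max (a := a - X ω) (b := b - Y ω)
        (c := 0) (d := 0)
    rw [setIntegral_qf_eq hX hα', setIntegral_qf_eq hY hα']
    linarith [sub_integral_posPart_le_setIntegral_qf (hX.add hY) hα' (a + b)]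
  · rw [setIntegral_qf_Ioc_zero_one hX.aemeasurable, setIntegral_qf_Ioc_zero_one hY.aemeasurable,
      setIntegral_qf_Ioc_zero_one (hX.add hY).aemeasurable, ← integral_add hX hY]
    rfl

end LowerQuantileFunction

end ProbabilityTheory

theorem ES_subadditive {Ω : Type*} [MeasurableSpace Ω] (μ : Measure Ω)
    [IsProbabilityMeasure μ] (X Y : Ω → ℝ)
    (hX : Integrable X μ) (hY : Integrable Y μ)
    (α : ℝ) (hα : α ∈ Set.Ioc (0:ℝ) 1) :
    ES μ (X + Y) α ≤ ES μ X α + ES μ Y α := by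
  rw [ES, ES, ES, ← mul_add]
  exact mul_le_mul_of_nonpos_left (setIntegral_qf_add_le hX hY hα)
    (neg_nonpos.2 (one_div_nonneg.2 hα.1.le))
end

section
/- Necessity of positivity: if there exists an interval I = [q₁,q₂] ⊂ (0,1) with ∫_I φ(p) dp < 0, then M_φ is not monotonous; specifically, there exist random variables X ≤ Y on a three-point probability space with M_φ(Y) > M_φ(X). -/
/-!
The indicator `𝟙_A` of an event has quantile function `𝟙_{(P[Aᶜ], 1]}`, so `M_φ(𝟙_A)` is
`-∫_{(P[Aᶜ], 1]} φ`. For `A ⊆ B` we have `𝟙_A ≤ 𝟙_B`, while `M_φ(𝟙_B) - M_φ(𝟙_A)` is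
`-∫_{(P[Bᶜ], P[Aᶜ]]} φ`; a three-point space realises `P[Bᶜ] = q₁` and `P[Aᶜ] = q₂`.
-/

open MeasureTheory

/-- The spectral risk measure generated by the risk spectrum `φ`. -/
noncomputable def Mphi {Ω : Type*} [MeasurableSpace Ω] (μ : Measure Ω)
    (φ : ℝ → ℝ) (X : Ω → ℝ) : ℝ :=
  -∫ p in Set.Ioc (0:ℝ) 1, qf μ X p * φ p

open Set

section Quantile

variable {Ω : Type*} [MeasurableSpace Ω] {μ : Measure Ω}

lemma qf_eq_of_measure_lt_of_le_measure [IsFiniteMeasure μ] {X : Ω → ℝ} {p c : ℝ}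
    (hlt : (μ {ω | X ω < c}).toReal < p) (hle : p ≤ (μ {ω | X ω ≤ c}).toReal) :
    qf μ X p = c := by
  suffices {x | p ≤ (μ {ω | X ω ≤ x}).toReal} = Ici c by rw [qf, this, csInf_Ici]
  ext x
  simp only [mem_ofPred_eq, mem_Ici]
  refine ⟨fun hx => ?_, fun hx => ?_⟩
  · by_contra! hxc
    have hsub : {ω | X ω ≤ x} ⊆ {ω | X ω < c} := fun ω (hω : X ω ≤ x) => hω.trans_lt hxc
    have := ENNReal.toReal_mono (measure_ne_top μ _) (measure_mono hsub)
    exact lt_irrefl p ((hx.trans this).trans_lt hlt)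
  · have hsub : {ω | X ω ≤ c} ⊆ {ω | X ω ≤ x} := fun ω (hω : X ω ≤ c) => hω.trans hx
    exact hle.trans (ENNReal.toReal_mono (measure_ne_top μ _) (measure_mono hsub))

lemma qf_indicator_one [IsProbabilityMeasure μ] (A : Set Ω) {p : ℝ} (hp : p ∈ Ioc 0 1) :
    qf μ (A.indicator 1) p = (Ioi (μ Aᶜ).toReal).indicator 1 p := by
  by_cases hpA : p ≤ (μ Aᶜ).toReal
  · rw [indicator_of_notMem (show p ∉ Ioi (μ Aᶜ).toReal from not_lt.mpr hpA)]
    have hlt : {ω | A.indicator (1 : Ω → ℝ) ω < 0} = ∅ := by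
      ext ω; by_cases ω ∈ A <;> simp [*]
    have hle : {ω | A.indicator (1 : Ω → ℝ) ω ≤ 0} = Aᶜ := by
      ext ω; by_cases ω ∈ A <;> simp [*]
    exact qf_eq_of_measure_lt_of_le_measure (by simpa [hlt] using hp.1) (by rwa [hle])
  · rw [indicator_of_mem (show p ∈ Ioi (μ Aᶜ).toReal from not_le.mp hpA), Pi.one_apply]
    have hlt : {ω | A.indicator (1 : Ω → ℝ) ω < 1} = Aᶜ := by
      ext ω; by_cases ω ∈ A <;> simp [*]
    have hle : {ω | A.indicator (1 : Ω → ℝ) ω ≤ 1} = univ := by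
      ext ω; by_cases ω ∈ A <;> simp [*]
    exact qf_eq_of_measure_lt_of_le_measure (by rwa [hlt, ← not_le]) (by simpa [hle] using hp.2)

lemma Mphi_indicator_one [IsProbabilityMeasure μ] (φ : ℝ → ℝ) (A : Set Ω) :
    Mphi μ φ (A.indicator 1) = -∫ p in Ioc (μ Aᶜ).toReal 1, φ p := by
  set t := (μ Aᶜ).toReal
  have hqf : EqOn (fun p => qf μ (A.indicator 1) p * φ p) ((Ioi t).indicator φ) (Ioc 0 1) := by
    intro p hp
    by_cases htp : p ∈ Ioi t <;> simp [qf_indicator_one A hp, t, htp]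
  rw [Mphi, setIntegral_congr_fun measurableSet_Ioc hqf, integral_indicator measurableSet_Ioi,
    Measure.restrict_restrict measurableSet_Ioi, inter_comm, Ioc_inter_Ioi,
    sup_eq_right.mpr ENNReal.toReal_nonneg]

lemma Mphi_indicator_one_sub_of_subset [IsProbabilityMeasure μ] {φ : ℝ → ℝ}
    (hφ : IntegrableOn φ (Ioc 0 1)) {A B : Set Ω} (hAB : A ⊆ B) :
    Mphi μ φ (B.indicator 1) - Mphi μ φ (A.indicator 1) =
      -∫ p in Ioc (μ Bᶜ).toReal (μ Aᶜ).toReal, φ p := by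
  have hBA : (μ Bᶜ).toReal ≤ (μ Aᶜ).toReal :=
    ENNReal.toReal_mono (measure_ne_top μ _) (measure_mono (compl_subset_compl.mpr hAB))
  have hA1 : (μ Aᶜ).toReal ≤ 1 := measureReal_le_one
  have hφB : IntegrableOn φ (Ioc (μ Bᶜ).toReal 1) :=
    hφ.mono_set (Ioc_subset_Ioc_left ENNReal.toReal_nonneg)
  have hsplit : ∫ p in Ioc (μ Bᶜ).toReal 1, φ p =
      (∫ p in Ioc (μ Bᶜ).toReal (μ Aᶜ).toReal, φ p) + ∫ p in Ioc (μ Aᶜ).toReal 1, φ p := by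
    rw [← setIntegral_union (Ioc_disjoint_Ioc_of_le le_rfl) measurableSet_Ioc
      (hφB.mono_set (Ioc_subset_Ioc_right hA1)) (hφB.mono_set (Ioc_subset_Ioc_left hBA)),
      Ioc_union_Ioc_eq_Ioc hBA hA1]
  rw [Mphi_indicator_one, Mphi_indicator_one, hsplit]
  ring

end Quantile

lemma exists_isProbabilityMeasure_fin_three {q₁ q₂ : ℝ} (h0 : 0 ≤ q₁) (h12 : q₁ ≤ q₂)
    (h1 : q₂ ≤ 1) : ∃ μ : Measure (Fin 3), IsProbabilityMeasure μ ∧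
      (μ {0}).toReal = q₁ ∧ (μ {0, 1}).toReal = q₂ := by
  set μ : Measure (Fin 3) := ENNReal.ofReal q₁ • Measure.dirac 0
    + ENNReal.ofReal (q₂ - q₁) • Measure.dirac 1 + ENNReal.ofReal (1 - q₂) • Measure.dirac 2
  have hμ0 : μ {0} = ENNReal.ofReal q₁ := by simp [μ]
  have hμ01 : μ {0, 1} = ENNReal.ofReal q₂ := by
    simp [μ, ← ENNReal.ofReal_add h0 (sub_nonneg.mpr h12)]
  have hμuniv : μ univ = 1 := by
    simp [μ, ← ENNReal.ofReal_add h0 (sub_nonneg.mpr h12),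
      ← ENNReal.ofReal_add (h0.trans h12) (sub_nonneg.mpr h1)]
  exact ⟨μ, ⟨hμuniv⟩, by simp [hμ0, h0], by simp [hμ01, h0.trans h12]⟩

theorem positivity_necessary (φ : ℝ → ℝ)
    (hint : IntegrableOn φ (Set.Ioc (0:ℝ) 1))
    (q₁ q₂ : ℝ) (h0 : 0 < q₁) (h12 : q₁ < q₂) (h1 : q₂ < 1)
    (hneg : (∫ p in Set.Ioc q₁ q₂, φ p) < 0) :
    ∃ (μ : Measure (Fin 3)) (X Y : Fin 3 → ℝ), IsProbabilityMeasure μ ∧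
      (∀ ω, X ω ≤ Y ω) ∧ Mphi μ φ X < Mphi μ φ Y := by
  obtain ⟨μ, hμ, hq₁, hq₂⟩ := exists_isProbabilityMeasure_fin_three h0.le h12.le h1.le
  have hAB : ({0, 1}ᶜ : Set (Fin 3)) ⊆ {0}ᶜ := compl_subset_compl.mpr (by simp)
  refine ⟨μ, ({0, 1}ᶜ : Set (Fin 3)).indicator 1, ({0}ᶜ : Set (Fin 3)).indicator 1, hμ,
    indicator_le_indicator_of_subset hAB (fun _ => zero_le_one), ?_⟩
  have := Mphi_indicator_one_sub_of_subset hint hAB (μ := μ)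
  rw [compl_compl, compl_compl, hq₁, hq₂] at this
  linarith
end

section
/- Necessity of monotonicity of the spectrum: if there exist q ∈ (0,1) and ε > 0 with [q−ε, q+ε] ⊂ (0,1) and ∫_{q−ε}^q φ(p) dp < ∫_q^{q+ε} φ(p) dp, then M_φ is not sub-additive: there exist random variables X, Y on a four-point probability space with M_φ(X+Y) > M_φ(X) + M_φ(Y). -/
open MeasureTheory

/-!
Take the law with weights `q - ε, ε, ε, 1 - q - ε` on four points, `X = (0, 1, 2, 3)` and
`Y = (0, 2, 1, 3)`. Since `Y` only swaps the values of `X` on the two atoms of weight `ε`, it has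
the same law as `X`, while `X + Y = (0, 3, 3, 6)`. The quantile function of a variable whose values
are listed in increasing order takes the `k`-th value on the `k`-th of the intervals
`(0, q - ε], (q - ε, q], (q, q + ε], (q + ε, 1]`. So the quantile function of `X + Y` exceeds
twice that of `X` by `1` on `(q - ε, q]`, falls short of it by `1` on `(q, q + ε]` and agrees
with it elsewhere, whence `M_φ(X + Y) - M_φ(X) - M_φ(Y) = ∫_q^{q+ε} φ - ∫_{q-ε}^q φ > 0`.
-/

open Set

noncomputable def weightedDirac {ι : Type*} [Fintype ι] [MeasurableSpace ι] (w : ι → ℝ) :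
    Measure ι :=
  ∑ i, ENNReal.ofReal (w i) • Measure.dirac i

section WeightedDirac

variable {ι : Type*} [Fintype ι] [MeasurableSpace ι] [MeasurableSingletonClass ι] {w : ι → ℝ}

lemma weightedDirac_apply (hw : ∀ i, 0 ≤ w i) (s : Set ι) :
    weightedDirac w s = ENNReal.ofReal (∑ i, s.indicator w i) := by
  rw [ENNReal.ofReal_sum_of_nonneg fun i (_ : i ∈ Finset.univ) =>
    s.indicator_nonneg (fun i _ => hw i) i]
  simp only [weightedDirac, Measure.coe_finsetSum, Finset.sum_apply, Measure.smul_apply,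
    smul_eq_mul]
  refine Finset.sum_congr rfl fun i _ => ?_
  by_cases hi : i ∈ s <;> simp [Measure.dirac_apply, hi]

lemma weightedDirac_real_apply (hw : ∀ i, 0 ≤ w i) (s : Set ι) :
    (weightedDirac w s).toReal = ∑ i, s.indicator w i := by
  rw [weightedDirac_apply hw, ENNReal.toReal_ofReal
    (Finset.sum_nonneg fun i _ => s.indicator_nonneg (fun i _ => hw i) i)]

lemma isProbabilityMeasure_weightedDirac (hw : ∀ i, 0 ≤ w i) (hsum : ∑ i, w i = 1) :
    IsProbabilityMeasure (weightedDirac w) :=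
  ⟨by simp [weightedDirac_apply hw, hsum]⟩

end WeightedDirac

section Quantile

variable {Ω : Type*} [MeasurableSpace Ω] {μ : Measure Ω}

lemma qf_eq_of_cdf {Z : Ω → ℝ} {p v : ℝ}
    (hge : ∀ x, v ≤ x → p ≤ (μ {ω | Z ω ≤ x}).toReal)
    (hlt : ∀ x < v, (μ {ω | Z ω ≤ x}).toReal < p) :
    qf μ Z p = v := by
  have : {x | p ≤ (μ {ω | Z ω ≤ x}).toReal} = Ici v := by
    ext x
    exact ⟨fun h => not_lt.1 fun hx => (hlt x hx).not_ge h, hge x⟩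
  rw [qf, this, csInf_Ici]

lemma Mphi_eq_of_cdf_eq {X Y : Ω → ℝ} (φ : ℝ → ℝ)
    (h : ∀ x, (μ {ω | X ω ≤ x}).toReal = (μ {ω | Y ω ≤ x}).toReal) :
    Mphi μ φ X = Mphi μ φ Y := by
  simp only [Mphi, qf, h]

end Quantile

section StepIntegral

variable {f φ : ℝ → ℝ}

lemma intervalIntegrable_mul_of_eqOn_const {u v k : ℝ} (huv : u ≤ v)
    (hφ : IntegrableOn φ (Ioc u v)) (hf : EqOn f (fun _ => k) (Ioc u v)) :
    IntervalIntegrable (fun p => f p * φ p) volume u v :=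
  (intervalIntegrable_iff_integrableOn_Ioc_of_le huv).2 <|
    IntegrableOn.congr_fun (hφ.const_mul k) (fun p hp => by simp only [hf hp]) measurableSet_Ioc

lemma intervalIntegral_mul_of_eqOn_const {u v k : ℝ} (huv : u ≤ v)
    (hf : EqOn f (fun _ => k) (Ioc u v)) :
    ∫ p in u..v, f p * φ p = k * ∫ p in Ioc u v, φ p := by
  rw [intervalIntegral.integral_of_le huv, ← integral_const_mul]
  exact setIntegral_congr_fun measurableSet_Ioc fun p hp => by simp only [hf hp]

lemma setIntegral_Ioc_step_mul {a b c d e k₁ k₂ k₃ k₄ : ℝ}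
    (hab : a ≤ b) (hbc : b ≤ c) (hcd : c ≤ d) (hde : d ≤ e) (hφ : IntegrableOn φ (Ioc a e))
    (h₁ : EqOn f (fun _ => k₁) (Ioc a b)) (h₂ : EqOn f (fun _ => k₂) (Ioc b c))
    (h₃ : EqOn f (fun _ => k₃) (Ioc c d)) (h₄ : EqOn f (fun _ => k₄) (Ioc d e)) :
    ∫ p in Ioc a e, f p * φ p =
      k₁ * (∫ p in Ioc a b, φ p) + k₂ * (∫ p in Ioc b c, φ p) +
        k₃ * (∫ p in Ioc c d, φ p) + k₄ * (∫ p in Ioc d e, φ p) := by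
  have sub {u v : ℝ} (hu : a ≤ u) (hv : v ≤ e) : IntegrableOn φ (Ioc u v) :=
    hφ.mono_set (Ioc_subset_Ioc hu hv)
  have i₁ := intervalIntegrable_mul_of_eqOn_const hab (sub le_rfl (by linarith)) h₁
  have i₂ := intervalIntegrable_mul_of_eqOn_const hbc (sub hab (by linarith)) h₂
  have i₃ := intervalIntegrable_mul_of_eqOn_const hcd (sub (by linarith) hde) h₃
  have i₄ := intervalIntegrable_mul_of_eqOn_const hde (sub (by linarith) le_rfl) h₄
  rw [← intervalIntegral.integral_of_le (by linarith),
    ← intervalIntegral.integral_add_adjacent_intervals i₁ ((i₂.trans i₃).trans i₄),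
    ← intervalIntegral.integral_add_adjacent_intervals i₂ (i₃.trans i₄),
    ← intervalIntegral.integral_add_adjacent_intervals i₃ i₄,
    intervalIntegral_mul_of_eqOn_const hab h₁, intervalIntegral_mul_of_eqOn_const hbc h₂,
    intervalIntegral_mul_of_eqOn_const hcd h₃, intervalIntegral_mul_of_eqOn_const hde h₄]
  ring

end StepIntegral

noncomputable def fourPoint (q ε : ℝ) : Measure (Fin 4) :=
  weightedDirac ![q - ε, ε, ε, 1 - q - ε]

section FourPoint

variable {q ε : ℝ}

lemma fourPoint_weight_nonneg (hε : 0 ≤ ε) (h0 : 0 ≤ q - ε) (h1 : q + ε ≤ 1) (i : Fin 4) :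
    0 ≤ ![q - ε, ε, ε, 1 - q - ε] i := by
  fin_cases i <;> simp [hε, h0, show 0 ≤ 1 - q - ε by linarith]

lemma isProbabilityMeasure_fourPoint (hε : 0 ≤ ε) (h0 : 0 ≤ q - ε) (h1 : q + ε ≤ 1) :
    IsProbabilityMeasure (fourPoint q ε) :=
  isProbabilityMeasure_weightedDirac (fourPoint_weight_nonneg hε h0 h1)
    (by simp [Fin.sum_univ_four])

lemma fourPoint_cdf (hε : 0 ≤ ε) (h0 : 0 ≤ q - ε) (h1 : q + ε ≤ 1) (a b c d x : ℝ) :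
    (fourPoint q ε {ω | ![a, b, c, d] ω ≤ x}).toReal =
      (if a ≤ x then q - ε else 0) + (if b ≤ x then ε else 0) +
        (if c ≤ x then ε else 0) + (if d ≤ x then 1 - q - ε else 0) := by
  rw [fourPoint, weightedDirac_real_apply (fourPoint_weight_nonneg hε h0 h1), Fin.sum_univ_four]
  simp only [indicator_apply]
  rfl

lemma qf_fourPoint (hε : 0 ≤ ε) (h0 : 0 ≤ q - ε) (h1 : q + ε ≤ 1) {a b c d : ℝ}
    (hab : a ≤ b) (hbc : b ≤ c) (hcd : c ≤ d) :
    EqOn (qf (fourPoint q ε) ![a, b, c, d]) (fun _ => a) (Ioc 0 (q - ε)) ∧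
      EqOn (qf (fourPoint q ε) ![a, b, c, d]) (fun _ => b) (Ioc (q - ε) q) ∧
      EqOn (qf (fourPoint q ε) ![a, b, c, d]) (fun _ => c) (Ioc q (q + ε)) ∧
      EqOn (qf (fourPoint q ε) ![a, b, c, d]) (fun _ => d) (Ioc (q + ε) 1) := by
  refine ⟨?_, ?_, ?_, ?_⟩ <;> rintro p ⟨hp, hp'⟩ <;> apply qf_eq_of_cdf <;> intro x hx <;>
    rw [fourPoint_cdf hε h0 h1] <;> split_ifs <;> linarith

lemma setIntegral_qf_fourPoint_mul (hε : 0 ≤ ε) (h0 : 0 ≤ q - ε) (h1 : q + ε ≤ 1) {a b c d : ℝ}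
    (hab : a ≤ b) (hbc : b ≤ c) (hcd : c ≤ d) {φ : ℝ → ℝ} (hφ : IntegrableOn φ (Ioc 0 1)) :
    ∫ p in Ioc (0 : ℝ) 1, qf (fourPoint q ε) ![a, b, c, d] p * φ p =
      a * (∫ p in Ioc 0 (q - ε), φ p) + b * (∫ p in Ioc (q - ε) q, φ p) +
        c * (∫ p in Ioc q (q + ε), φ p) + d * (∫ p in Ioc (q + ε) 1, φ p) := by
  obtain ⟨h₁, h₂, h₃, h₄⟩ := qf_fourPoint hε h0 h1 hab hbc hcd
  exact setIntegral_Ioc_step_mul h0 (by linarith) (by linarith) h1 hφ h₁ h₂ h₃ h₄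

end FourPoint

theorem subadditivity_fails_of_nonmonotone_spectrum (φ : ℝ → ℝ)
    (hint : IntegrableOn φ (Set.Ioc (0:ℝ) 1))
    (q ε : ℝ) (hε : 0 < ε) (h0 : 0 < q - ε) (h1 : q + ε < 1)
    (hlt : (∫ p in Set.Ioc (q - ε) q, φ p) < ∫ p in Set.Ioc q (q + ε), φ p) :
    ∃ (μ : Measure (Fin 4)) (X Y : Fin 4 → ℝ), IsProbabilityMeasure μ ∧
      Mphi μ φ X + Mphi μ φ Y < Mphi μ φ (X + Y) := by
  refine ⟨fourPoint q ε, ![0, 1, 2, 3], ![0, 2, 1, 3],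
    isProbabilityMeasure_fourPoint hε.le h0.le h1.le, ?_⟩
  have hY : Mphi (fourPoint q ε) φ ![0, 2, 1, 3] = Mphi (fourPoint q ε) φ ![0, 1, 2, 3] :=
    Mphi_eq_of_cdf_eq φ fun x => by
      rw [fourPoint_cdf hε.le h0.le h1.le, fourPoint_cdf hε.le h0.le h1.le]
      ring
  have hXY : (![0, 1, 2, 3] + ![0, 2, 1, 3] : Fin 4 → ℝ) = ![0, 3, 3, 6] := by norm_num
  rw [hY, hXY, Mphi, Mphi, setIntegral_qf_fourPoint_mul hε.le h0.le h1.le (by norm_num)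
    (by norm_num) (by norm_num) hint, setIntegral_qf_fourPoint_mul hε.le h0.le h1.le (by norm_num)
    (by norm_num) (by norm_num) hint]
  linarith
end

section
/- Discrete spectral risk measures are coherent: let φ₁ ≥ φ₂ ≥ … ≥ φ_N ≥ 0 with Σᵢ φᵢ = 1; then M_φ^(N)(x) = −Σᵢ φᵢ x_{(i)} (where x_{(1)} ≤ … ≤ x_{(N)} are the order statistics of x ∈ ℝ^N) defines a functional on ℝ^N that is monotonous (componentwise x ≤ y implies M(y) ≤ M(x)), sub-additive (M(x+y) ≤ M(x)+M(y)), positively homogeneous, and satisfies M(x + a·𝟙) = M(x) − a. -/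
open MeasureTheory

/-- The increasing rearrangement (order statistics) of `x`. -/
noncomputable def srt {N : ℕ} (x : Fin N → ℝ) : Fin N → ℝ := x ∘ Tuple.sort x

/-!
Write `S x = ∑ i, φ i * x₍ᵢ₎`. By the rearrangement inequality, for a decreasing weight `φ` the
sorted sum `S x` is the minimum of `∑ i, φ i * x (σ i)` over all permutations `σ`. Hence `S` is a
minimum of linear functionals, so it is superadditive, and it is monotone when `φ ≥ 0`. Sorting
commutes with increasing maps `t ↦ h * t` and `t ↦ t + a`, which gives homogeneity and, since
`∑ i, φ i = 1`, translation equivariance.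
-/

section

variable {N : ℕ}

lemma srt_monotone (x : Fin N → ℝ) : Monotone (srt x) :=
  Tuple.monotone_sort x

lemma srt_comp_of_monotone (x : Fin N → ℝ) {g : ℝ → ℝ} (hg : Monotone g) :
    srt (g ∘ x) = g ∘ srt x :=
  (Tuple.comp_sort_eq_comp_iff_monotone.mpr (hg.comp (srt_monotone x))).symm

lemma srt_smul (x : Fin N → ℝ) {h : ℝ} (hh : 0 ≤ h) : srt (h • x) = h • srt x :=
  srt_comp_of_monotone x (g := (h * ·)) fun _ _ hab => mul_le_mul_of_nonneg_left hab hh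

lemma srt_add_const (x : Fin N → ℝ) (a : ℝ) :
    srt (x + fun _ => a) = srt x + fun _ => a :=
  srt_comp_of_monotone x (g := (· + a)) fun _ _ hab => add_le_add_left hab a

variable {φ : Fin N → ℝ}

lemma sum_mul_srt_le_sum_mul_comp_perm (hφ : Antitone φ) (x : Fin N → ℝ)
    (σ : Equiv.Perm (Fin N)) : ∑ i, φ i * srt x i ≤ ∑ i, φ i * x (σ i) := by
  have h := (hφ.antivary (srt_monotone x)).sum_mul_le_sum_mul_comp_perm
    (σ := (Tuple.sort x).symm * σ)
  simpa [srt] using h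

lemma sum_mul_srt_mono (hpos : ∀ i, 0 ≤ φ i) (hφ : Antitone φ) {x y : Fin N → ℝ}
    (hxy : ∀ i, x i ≤ y i) : ∑ i, φ i * srt x i ≤ ∑ i, φ i * srt y i :=
  calc ∑ i, φ i * srt x i ≤ ∑ i, φ i * x (Tuple.sort y i) :=
        sum_mul_srt_le_sum_mul_comp_perm hφ x _
    _ ≤ ∑ i, φ i * srt y i :=
        Finset.sum_le_sum fun i _ => mul_le_mul_of_nonneg_left (hxy _) (hpos i)

lemma sum_mul_srt_add_le (hφ : Antitone φ) (x y : Fin N → ℝ) :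
    ∑ i, φ i * srt x i + ∑ i, φ i * srt y i ≤ ∑ i, φ i * srt (x + y) i :=
  calc ∑ i, φ i * srt x i + ∑ i, φ i * srt y i
      ≤ ∑ i, φ i * x (Tuple.sort (x + y) i) + ∑ i, φ i * y (Tuple.sort (x + y) i) :=
        add_le_add (sum_mul_srt_le_sum_mul_comp_perm hφ x _)
          (sum_mul_srt_le_sum_mul_comp_perm hφ y _)
    _ = ∑ i, φ i * srt (x + y) i := by
        simp only [← Finset.sum_add_distrib, ← mul_add]; rfl

end

theorem discrete_spectral_coherent {N : ℕ} (φ : Fin N → ℝ)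
    (hpos : ∀ i, 0 ≤ φ i) (hdec : ∀ i j : Fin N, i ≤ j → φ j ≤ φ i)
    (hsum : ∑ i, φ i = 1) :
    (∀ x y : Fin N → ℝ, (∀ i, x i ≤ y i) →
        -∑ i, φ i * srt y i ≤ -∑ i, φ i * srt x i) ∧
    (∀ x y : Fin N → ℝ,
        -∑ i, φ i * srt (x + y) i ≤ (-∑ i, φ i * srt x i) + -∑ i, φ i * srt y i) ∧
    (∀ (x : Fin N → ℝ) (h : ℝ), 0 < h →
        -∑ i, φ i * srt (h • x) i = h * -∑ i, φ i * srt x i) ∧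
    (∀ (x : Fin N → ℝ) (a : ℝ),
        -∑ i, φ i * srt (x + fun _ => a) i = (-∑ i, φ i * srt x i) - a) := by
  have hφ : Antitone φ := fun i j hij => hdec i j hij
  refine ⟨fun x y hxy => neg_le_neg (sum_mul_srt_mono hpos hφ hxy),
    fun x y => by linarith [sum_mul_srt_add_le hφ x y], fun x h hh => ?_, fun x a => ?_⟩
  · simp only [srt_smul x hh.le, Pi.smul_apply, smul_eq_mul, mul_left_comm (φ _),
      ← Finset.mul_sum, mul_neg]
  · simp only [srt_add_const, Pi.add_apply, mul_add, Finset.sum_add_distrib, ← Finset.sum_mul,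
      hsum]
    ring
end

section
/- Discrete sub-additivity fails for non-monotone spectra: if φ ∈ ℝ^N with Σφᵢ = 1 has φⱼ < φ_k for some j < k, then there exist x, y ∈ ℝ^N with Σᵢ φᵢ (x+y)_{(i)} < Σᵢ φᵢ x_{(i)} + Σᵢ φᵢ y_{(i)}, i.e. M_φ^(N)(x+y) > M_φ^(N)(x) + M_φ^(N)(y) where M_φ^(N)(x) = −Σᵢ φᵢ x_{(i)}. -/
open MeasureTheory

/-- Auxiliary staircase with a `-1` at position `J` and a `1` at position `K`. -/
noncomputable def gAux (J K : ℕ) (n : ℕ) : ℝ :=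
  if n < J then (n : ℝ) - J - 1
  else if n = J then -1
  else if n < K then 0
  else if n = K then 1
  else (n : ℝ) - K + 1

lemma gAux_mono {J K : ℕ} (h : J < K) : Monotone (gAux J K) := by
  apply monotone_nat_of_le_succ
  intro n
  unfold gAux
  split_ifs <;> first | (exfalso; omega) | ((try rify at *); linarith)

/-- Auxiliary staircase for the sum. -/
noncomputable def hAux (J K : ℕ) (n : ℕ) : ℝ :=
  if n < J then 2 * ((n : ℝ) - J - 1)
  else if n ≤ K then 0
  else 2 * ((n : ℝ) - K + 1)

lemma hAux_mono {J K : ℕ} (h : J < K) : Monotone (hAux J K) := by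
  apply monotone_nat_of_le_succ
  intro n
  unfold hAux
  split_ifs <;> first | (exfalso; omega) | ((try rify at *); linarith)

theorem discrete_subadditivity_fails {N : ℕ} (φ : Fin N → ℝ)
    (hsum : ∑ i, φ i = 1) (j k : Fin N) (hjk : j < k) (hφ : φ j < φ k) :
    ∃ x y : Fin N → ℝ,
      ∑ i, φ i * srt (x + y) i < (∑ i, φ i * srt x i) + ∑ i, φ i * srt y i := by
  classical
  have hjkN : (j : ℕ) < (k : ℕ) := hjk
  set s : Fin N → ℝ := fun i => gAux (j : ℕ) (k : ℕ) (i : ℕ) with hs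
  have hsmono : Monotone s := (gAux_mono hjkN).comp (fun a b hab => hab)
  set x : Fin N → ℝ := fun i => s (Equiv.swap j k i) with hx
  -- values of s at j and k
  have hsj : s j = -1 := by
    show gAux (j : ℕ) (k : ℕ) (j : ℕ) = -1
    unfold gAux
    rw [if_neg (by omega), if_pos rfl]
  have hsk : s k = 1 := by
    show gAux (j : ℕ) (k : ℕ) (k : ℕ) = 1
    unfold gAux
    rw [if_neg (by omega), if_neg (by omega), if_neg (by omega), if_pos rfl]
  -- srt s = s
  have hsrty : srt s = s := by
    unfold srt
    rw [Tuple.sort_eq_refl_iff_monotone.mpr hsmono]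
    rfl
  -- x ∘ swap = s
  have hxσ : x ∘ (Equiv.swap j k) = s := by
    funext i
    simp [hx, Equiv.swap_apply_self]
  -- srt x = s
  have hsrtx : srt x = s := by
    unfold srt
    rw [← (Tuple.comp_sort_eq_comp_iff_monotone (σ := Equiv.swap j k)).mpr
      (by rw [hxσ]; exact hsmono)]
    exact hxσ
  -- x + s equals the monotone staircase hAux
  have hxy : ∀ i : Fin N, (x + s) i = hAux (j : ℕ) (k : ℕ) (i : ℕ) := by
    intro i
    by_cases hij : i = j
    · rw [hij]
      have : (x + s) j = s k + s j := by
        simp [hx, Equiv.swap_apply_left]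
      rw [this, hsk, hsj]
      unfold hAux
      rw [if_neg (by omega), if_pos (by omega)]
      ring
    · by_cases hik : i = k
      · rw [hik]
        have : (x + s) k = s j + s k := by
          simp [hx, Equiv.swap_apply_right]
        rw [this, hsj, hsk]
        unfold hAux
        rw [if_neg (by omega), if_pos (by omega)]
        ring
      · have hσi : Equiv.swap j k i = i := Equiv.swap_apply_of_ne_of_ne hij hik
        have : (x + s) i = s i + s i := by simp [hx, hσi]
        rw [this]
        have hij' : (i : ℕ) ≠ (j : ℕ) := fun h => hij (Fin.ext h)
        have hik' : (i : ℕ) ≠ (k : ℕ) := fun h => hik (Fin.ext h)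
        show gAux (j : ℕ) (k : ℕ) (i : ℕ) + gAux (j : ℕ) (k : ℕ) (i : ℕ)
          = hAux (j : ℕ) (k : ℕ) (i : ℕ)
        unfold gAux hAux
        split_ifs <;> first | (exfalso; omega) | ring
  have hxymono : Monotone (x + s) := by
    intro a b hab
    rw [hxy a, hxy b]
    exact hAux_mono hjkN hab
  have hsrtxy : srt (x + s) = x + s := by
    unfold srt
    rw [Tuple.sort_eq_refl_iff_monotone.mpr hxymono]
    rfl
  refine ⟨x, s, ?_⟩
  rw [hsrtx, hsrty, hsrtxy]
  -- reduce to comparing the sums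
  have key : ∑ i, (φ i * s i + φ i * s i - φ i * (x + s) i)
      = (φ k - φ j) * 2 := by
    have hterm : ∀ i : Fin N, φ i * s i + φ i * s i - φ i * (x + s) i
        = φ i * (s i - s (Equiv.swap j k i)) := by
      intro i
      simp only [Pi.add_apply, hx]
      ring
    rw [Finset.sum_congr rfl fun i _ => hterm i]
    have hzero : ∀ i ∈ Finset.univ, i ∉ ({j, k} : Finset (Fin N)) →
        φ i * (s i - s (Equiv.swap j k i)) = 0 := by
      intro i _ hi
      simp only [Finset.mem_insert, Finset.mem_singleton, not_or] at hi
      rw [Equiv.swap_apply_of_ne_of_ne hi.1 hi.2]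
      ring
    rw [← Finset.sum_subset (Finset.subset_univ ({j, k} : Finset (Fin N))) hzero]
    rw [Finset.sum_pair hjk.ne]
    rw [Equiv.swap_apply_left, Equiv.swap_apply_right, hsj, hsk]
    ring
  have hsum' : ∑ i, (φ i * s i + φ i * s i - φ i * (x + s) i)
      = (∑ i, φ i * s i + ∑ i, φ i * s i) - ∑ i, φ i * (x + s) i := by
    rw [Finset.sum_sub_distrib, Finset.sum_add_distrib]
  rw [hsum'] at key
  have hpos : (0:ℝ) < (φ k - φ j) * 2 := by linarith
  linarith
end
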